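/- Let Ω ⊂ ℂ be a bounded open set and let h : Ω → ℂ be C¹ with finite Dirichlet energy, whose Hopf product vanishes identically: h_z(z)·conj(h_z̄(z)) = 0 for every z ∈ Ω. Then no inner variation of h decreases its energy: for every admissible change of variables ξ of Ω, one has E[h] ≤ E[h ∘ ξ]. -/

import Mathlib

/-!
When the Hopf product `h_z · conj h_z̄` vanishes, the chain rule for `h ∘ ξ` gives the pointwise
identity `e[h ∘ ξ] = (e[h] ∘ ξ) · (|ξ_z|² + |ξ_z̄|²) = (e[h] ∘ ξ) · J_ξ + 2 (e[h] ∘ ξ) · |ξ_z̄|²`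
for the energy density `e[f] = |f_z|² + |f_z̄|²`. By the change of variables formula the first
term integrates to `E[h]`, and the second is nonnegative. It is integrable because it is
continuous and `ξ_z̄` vanishes off the compact set outside which `ξ` is the identity.
-/

open Complex MeasureTheory Set

/-- Wirtinger derivative `∂f/∂z` via the real Fréchet derivative. -/
noncomputable def wdz (f : ℂ → ℂ) (z : ℂ) : ℂ :=
  (1 / 2 : ℂ) * (fderiv ℝ f z 1 - Complex.I * fderiv ℝ f z Complex.I)

/-- Wirtinger derivative `∂f/∂z̄` via the real Fréchet derivative. -/
noncomputable def wdzbar (f : ℂ → ℂ) (z : ℂ) : ℂ :=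
  (1 / 2 : ℂ) * (fderiv ℝ f z 1 + Complex.I * fderiv ℝ f z Complex.I)

/-- Dirichlet energy of `f` on `Ω`. -/
noncomputable def energy (Ω : Set ℂ) (f : ℂ → ℂ) : ℝ :=
  ∫ z in Ω, ((‖wdz f z‖) ^ 2 + (‖wdzbar f z‖) ^ 2)

/-- A test function on `Ω`: smooth with compact support contained in `Ω`. -/
def IsTestFunction (Ω : Set ℂ) (η : ℂ → ℂ) : Prop :=
  ContDiff ℝ (⊤ : ℕ∞) η ∧ IsCompact (tsupport η) ∧ tsupport η ⊆ Ω

/-- An admissible change of variables of `Ω`: a `C¹` diffeomorphism of `Ω` onto itself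
with everywhere positive Jacobian, equal to the identity outside a compact subset of `Ω`. -/
structure IsAdmissibleChange (Ω : Set ℂ) (ξ : ℂ → ℂ) : Prop where
  contDiffOn : ContDiffOn ℝ 1 ξ Ω
  bijOn : Set.BijOn ξ Ω Ω
  jac_pos : ∀ z ∈ Ω, (‖wdz ξ z‖) ^ 2 - (‖wdzbar ξ z‖) ^ 2 > 0
  eq_id : ∃ K : Set ℂ, IsCompact K ∧ K ⊆ Ω ∧ ∀ z ∉ K, ξ z = z

/-- `h` is Hopf harmonic on `Ω`: `h` is `C¹` and its Hopf product is holomorphic on `Ω`. -/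
def IsHopfHarmonic (Ω : Set ℂ) (h : ℂ → ℂ) : Prop :=
  ContDiffOn ℝ 1 h Ω ∧
    DifferentiableOn ℂ (fun z => wdz h z * (starRingEnd ℂ) (wdzbar h z)) Ω

open ComplexConjugate Filter Topology

noncomputable def energyDensity (f : ℂ → ℂ) (z : ℂ) : ℝ :=
  ‖wdz f z‖ ^ 2 + ‖wdzbar f z‖ ^ 2

lemma energyDensity_nonneg (f : ℂ → ℂ) (z : ℂ) : 0 ≤ energyDensity f z := by
  unfold energyDensity; positivity

lemma ContinuousLinearMap.apply_eq_mul_add_mul_conj (L : ℂ →L[ℝ] ℂ) (v : ℂ) :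
    L v = (1 / 2 : ℂ) * (L 1 - I * L I) * v + (1 / 2 : ℂ) * (L 1 + I * L I) * conj v := by
  have hv : L v = (v.re : ℂ) * L 1 + (v.im : ℂ) * L I := by
    conv_lhs => rw [show v = v.re • (1 : ℂ) + v.im • I by simp [real_smul, re_add_im]]
    rw [map_add, map_smul, map_smul, real_smul, real_smul]
  have hc : conj v = (v.re : ℂ) - (v.im : ℂ) * I := by simp [Complex.ext_iff]
  rw [hv, hc]
  nth_rewrite 3 [← re_add_im v]
  linear_combination ((v.im : ℂ) * L I) * I_sq

lemma fderiv_apply_eq_wdz_add_wdzbar (f : ℂ → ℂ) (z v : ℂ) :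
    fderiv ℝ f z v = wdz f z * v + wdzbar f z * conj v :=
  (fderiv ℝ f z).apply_eq_mul_add_mul_conj v

lemma det_fderiv_eq_norm_wdz_sq_sub (f : ℂ → ℂ) (z : ℂ) :
    (fderiv ℝ f z).det = ‖wdz f z‖ ^ 2 - ‖wdzbar f z‖ ^ 2 := by
  set M := fderiv ℝ f z
  have hdet : M.det = (M 1).re * (M I).im - (M I).re * (M 1).im := by
    rw [ContinuousLinearMap.det, ← LinearMap.det_toMatrix basisOneI, Matrix.det_fin_two]
    simp [LinearMap.toMatrix_apply, coe_basisOneI_repr, coe_basisOneI]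
  rw [hdet]
  simp only [wdz, wdzbar, Complex.sq_norm, normSq_apply, mul_re, mul_im, sub_re, sub_im, add_re,
    add_im, I_re, I_im, show ((1 : ℂ) / 2).re = 1 / 2 by norm_num,
    show ((1 : ℂ) / 2).im = 0 by norm_num]
  ring

section ChainRule

variable {h ξ : ℂ → ℂ} {z : ℂ}

lemma wdz_comp (hh : DifferentiableAt ℝ h (ξ z)) (hξ : DifferentiableAt ℝ ξ z) :
    wdz (h ∘ ξ) z = wdz h (ξ z) * wdz ξ z + wdzbar h (ξ z) * conj (wdzbar ξ z) := by
  rw [wdz, fderiv_comp z hh hξ, ContinuousLinearMap.comp_apply, ContinuousLinearMap.comp_apply,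
    fderiv_apply_eq_wdz_add_wdzbar h (ξ z), fderiv_apply_eq_wdz_add_wdzbar h (ξ z),
    fderiv_apply_eq_wdz_add_wdzbar ξ z 1, fderiv_apply_eq_wdz_add_wdzbar ξ z I]
  simp only [map_add, map_mul, map_one, conj_I, map_neg]
  ring_nf
  rw [I_sq]
  ring

lemma wdzbar_comp (hh : DifferentiableAt ℝ h (ξ z)) (hξ : DifferentiableAt ℝ ξ z) :
    wdzbar (h ∘ ξ) z = wdz h (ξ z) * wdzbar ξ z + wdzbar h (ξ z) * conj (wdz ξ z) := by
  rw [wdzbar, fderiv_comp z hh hξ, ContinuousLinearMap.comp_apply, ContinuousLinearMap.comp_apply,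
    fderiv_apply_eq_wdz_add_wdzbar h (ξ z), fderiv_apply_eq_wdz_add_wdzbar h (ξ z),
    fderiv_apply_eq_wdz_add_wdzbar ξ z 1, fderiv_apply_eq_wdz_add_wdzbar ξ z I]
  simp only [map_add, map_mul, map_one, conj_I, map_neg]
  ring_nf
  rw [I_sq]
  ring

end ChainRule

lemma norm_mul_add_mul_conj_sq_add_sq {p q a b : ℂ} (hpq : p * conj q = 0) :
    ‖p * a + q * conj b‖ ^ 2 + ‖p * b + q * conj a‖ ^ 2
      = (‖p‖ ^ 2 + ‖q‖ ^ 2) * (‖a‖ ^ 2 + ‖b‖ ^ 2) := by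
  have cross₁ : p * a * conj (q * conj b) = 0 := by
    rw [map_mul, conj_conj]; linear_combination (a * b) * hpq
  have cross₂ : p * b * conj (q * conj a) = 0 := by
    rw [map_mul, conj_conj]; linear_combination (a * b) * hpq
  simp only [Complex.sq_norm, normSq_add, cross₁, cross₂, normSq_mul, normSq_conj, zero_re,
    mul_zero, add_zero]
  ring

lemma energyDensity_comp {h ξ : ℂ → ℂ} {z : ℂ} (hh : DifferentiableAt ℝ h (ξ z))
    (hξ : DifferentiableAt ℝ ξ z) (hHopf : wdz h (ξ z) * conj (wdzbar h (ξ z)) = 0) :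
    energyDensity (h ∘ ξ) z = energyDensity h (ξ z) * energyDensity ξ z := by
  rw [energyDensity, wdz_comp hh hξ, wdzbar_comp hh hξ, norm_mul_add_mul_conj_sq_add_sq hHopf]
  rfl

section Continuity

variable {Ω : Set ℂ} {f : ℂ → ℂ}

lemma ContDiffOn.continuousOn_fderiv_apply (hΩ : IsOpen Ω) (hf : ContDiffOn ℝ 1 f Ω) (v : ℂ) :
    ContinuousOn (fun z => fderiv ℝ f z v) Ω :=
  (ContinuousLinearMap.apply ℝ ℂ v).continuous.comp_continuousOn
    (hf.continuousOn_fderiv_of_isOpen hΩ le_rfl)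

lemma ContDiffOn.continuousOn_wdz (hΩ : IsOpen Ω) (hf : ContDiffOn ℝ 1 f Ω) :
    ContinuousOn (wdz f) Ω :=
  continuousOn_const.mul ((hf.continuousOn_fderiv_apply hΩ 1).sub
    (continuousOn_const.mul (hf.continuousOn_fderiv_apply hΩ I)))

lemma ContDiffOn.continuousOn_wdzbar (hΩ : IsOpen Ω) (hf : ContDiffOn ℝ 1 f Ω) :
    ContinuousOn (wdzbar f) Ω :=
  continuousOn_const.mul ((hf.continuousOn_fderiv_apply hΩ 1).add
    (continuousOn_const.mul (hf.continuousOn_fderiv_apply hΩ I)))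

lemma ContDiffOn.continuousOn_energyDensity (hΩ : IsOpen Ω) (hf : ContDiffOn ℝ 1 f Ω) :
    ContinuousOn (energyDensity f) Ω :=
  ((hf.continuousOn_wdz hΩ).norm.pow 2).add ((hf.continuousOn_wdzbar hΩ).norm.pow 2)

end Continuity

lemma wdzbar_eq_zero_of_eventuallyEq_id {f : ℂ → ℂ} {z : ℂ} (hf : f =ᶠ[𝓝 z] id) :
    wdzbar f z = 0 := by
  simp [wdzbar, hf.fderiv_eq, I_mul_I]

namespace IsAdmissibleChange

variable {Ω : Set ℂ} {ξ : ℂ → ℂ}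

lemma differentiableAt (hΩ : IsOpen Ω) (hξ : IsAdmissibleChange Ω ξ) {z : ℂ} (hz : z ∈ Ω) :
    DifferentiableAt ℝ ξ z :=
  (hξ.contDiffOn.contDiffAt (hΩ.mem_nhds hz)).differentiableAt one_ne_zero

lemma abs_det_fderiv (hξ : IsAdmissibleChange Ω ξ) {z : ℂ} (hz : z ∈ Ω) :
    |(fderiv ℝ ξ z).det| = ‖wdz ξ z‖ ^ 2 - ‖wdzbar ξ z‖ ^ 2 := by
  rw [det_fderiv_eq_norm_wdz_sq_sub, abs_of_pos (hξ.jac_pos z hz)]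

lemma integrableOn_comp_mul_jacobian_iff (hΩ : IsOpen Ω) (hξ : IsAdmissibleChange Ω ξ)
    {g : ℂ → ℝ} :
    IntegrableOn (fun z => g (ξ z) * (‖wdz ξ z‖ ^ 2 - ‖wdzbar ξ z‖ ^ 2)) Ω ↔ IntegrableOn g Ω := by
  have hcov := integrableOn_image_iff_integrableOn_abs_det_fderiv_smul volume hΩ.measurableSet
    (fun z hz => (hξ.differentiableAt hΩ hz).hasFDerivAt.hasFDerivWithinAt) hξ.bijOn.injOn g
  rw [hξ.bijOn.image_eq] at hcov
  rw [hcov]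
  refine integrableOn_congr_fun (fun z hz => ?_) hΩ.measurableSet
  rw [smul_eq_mul, hξ.abs_det_fderiv hz, mul_comm]

lemma integral_comp_mul_jacobian (hΩ : IsOpen Ω) (hξ : IsAdmissibleChange Ω ξ) (g : ℂ → ℝ) :
    ∫ z in Ω, g (ξ z) * (‖wdz ξ z‖ ^ 2 - ‖wdzbar ξ z‖ ^ 2) = ∫ z in Ω, g z := by
  have hcov := integral_image_eq_integral_abs_det_fderiv_smul volume hΩ.measurableSet
    (fun z hz => (hξ.differentiableAt hΩ hz).hasFDerivAt.hasFDerivWithinAt) hξ.bijOn.injOn g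
  rw [hξ.bijOn.image_eq] at hcov
  rw [hcov]
  refine setIntegral_congr_fun hΩ.measurableSet (fun z hz => ?_)
  rw [smul_eq_mul, hξ.abs_det_fderiv hz, mul_comm]

lemma integrableOn_comp_mul_norm_wdzbar_sq (hΩ : IsOpen Ω) (hξ : IsAdmissibleChange Ω ξ)
    {g : ℂ → ℝ} (hg : ContinuousOn g Ω) :
    IntegrableOn (fun z => g (ξ z) * ‖wdzbar ξ z‖ ^ 2) Ω := by
  obtain ⟨K, hK, hKΩ, hid⟩ := hξ.eq_id
  have hcont : ContinuousOn (fun z => g (ξ z) * ‖wdzbar ξ z‖ ^ 2) Ω :=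
    (hg.comp hξ.contDiffOn.continuousOn hξ.bijOn.mapsTo).mul
      ((hξ.contDiffOn.continuousOn_wdzbar hΩ).norm.pow 2)
  refine ((hcont.mono hKΩ).integrableOn_compact hK).of_forall_sdiff_eq_zero hΩ.measurableSet ?_
  rintro z ⟨-, hzK⟩
  have hξ_id : ξ =ᶠ[𝓝 z] id :=
    eventually_of_mem (hK.isClosed.isOpen_compl.mem_nhds hzK) hid
  simp [wdzbar_eq_zero_of_eventuallyEq_id hξ_id]

end IsAdmissibleChange

theorem stmt_2_general (Ω : Set ℂ) (hΩo : IsOpen Ω)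
    (h : ℂ → ℂ) (hh : ContDiffOn ℝ 1 h Ω)
    (hfin : IntegrableOn
      (fun z => (‖wdz h z‖) ^ 2 + (‖wdzbar h z‖) ^ 2) Ω volume)
    (hHopf : ∀ z ∈ Ω, wdz h z * (starRingEnd ℂ) (wdzbar h z) = 0) :
    ∀ ξ : ℂ → ℂ, IsAdmissibleChange Ω ξ → energy Ω h ≤ energy Ω (h ∘ ξ) := by
  intro ξ hξ
  set e := energyDensity h
  set J := fun z => ‖wdz ξ z‖ ^ 2 - ‖wdzbar ξ z‖ ^ 2
  have hsplit : EqOn (energyDensity (h ∘ ξ))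
      (fun z => e (ξ z) * J z + 2 * (e (ξ z) * ‖wdzbar ξ z‖ ^ 2)) Ω := by
    intro z hz
    have hξz := hξ.bijOn.mapsTo hz
    rw [energyDensity_comp ((hh.contDiffAt (hΩo.mem_nhds hξz)).differentiableAt one_ne_zero)
      (hξ.differentiableAt hΩo hz) (hHopf _ hξz)]
    simp only [e, J, energyDensity]
    ring
  have hmain : IntegrableOn (fun z => e (ξ z) * J z) Ω :=
    (hξ.integrableOn_comp_mul_jacobian_iff hΩo).2 hfin
  have hrest := hξ.integrableOn_comp_mul_norm_wdzbar_sq hΩo (hh.continuousOn_energyDensity hΩo)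
  calc energy Ω h = ∫ z in Ω, e (ξ z) * J z := (hξ.integral_comp_mul_jacobian hΩo e).symm
    _ ≤ ∫ z in Ω, (e (ξ z) * J z + 2 * (e (ξ z) * ‖wdzbar ξ z‖ ^ 2)) :=
        setIntegral_mono_on hmain (hmain.add (hrest.const_mul 2)) hΩo.measurableSet
          fun z _ => le_add_of_nonneg_right (by have := energyDensity_nonneg h (ξ z); positivity)
    _ = energy Ω (h ∘ ξ) := (setIntegral_congr_fun hΩo.measurableSet hsplit).symm

/-- If the Hopf product of `h` vanishes identically, then no inner
variation of `h` decreases its energy. -/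
theorem stmt_2 (Ω : Set ℂ) (hΩo : IsOpen Ω) (hΩb : Bornology.IsBounded Ω)
    (h : ℂ → ℂ) (hh : ContDiffOn ℝ 1 h Ω)
    (hfin : IntegrableOn
      (fun z => (‖wdz h z‖) ^ 2 + (‖wdzbar h z‖) ^ 2) Ω volume)
    (hHopf : ∀ z ∈ Ω, wdz h z * (starRingEnd ℂ) (wdzbar h z) = 0) :
    ∀ ξ : ℂ → ℂ, IsAdmissibleChange Ω ξ → energy Ω h ≤ energy Ω (h ∘ ξ) :=
  stmt_2_general Ω hΩo h hh hfin hHopf
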